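/- If a periodic sequence is generated (terminatingly) by the GPO algorithm with a standard feedback function f of order n, then its nonlinear complexity is exactly n. -/
import Mathlib


/-- The state map of an `n`-stage FSR with feedback function `f`. -/
def stateMap (n : ℕ) (f : (Fin n → ZMod 2) → ZMod 2) (x : Fin n → ZMod 2) :
    Fin n → ZMod 2 :=
  fun i => if h : i.val + 1 < n then x ⟨i.val + 1, h⟩ else f x

/-- A feedback function is standard if it does not depend on the coordinate `x_0`. -/
def IsStandard (n : ℕ) (f : (Fin n → ZMod 2) → ZMod 2) : Prop :=
  ∀ x y : Fin n → ZMod 2, (∀ i : Fin n, i.val ≠ 0 → x i = y i) → f x = f y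

/-- Shift the state `c` one step to the left, feeding in the new bit `b`. -/
def shiftIn (n : ℕ) (c : Fin n → ZMod 2) (b : ZMod 2) : Fin n → ZMod 2 :=
  fun i => if h : i.val + 1 < n then c ⟨i.val + 1, h⟩ else b

/-- One run of the Generalized Prefer-Opposite algorithm: the pair consists of the
current state after `t` steps and the list of all states visited so far.  From the
current state `c` the algorithm moves to `(c_1,...,c_{n-1}, 1 + f(c))` if that state
has not appeared before, and to `(c_1,...,c_{n-1}, f(c))` otherwise. -/
def gpoRun (n : ℕ) (f : (Fin n → ZMod 2) → ZMod 2) (u : Fin n → ZMod 2) :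
    ℕ → (Fin n → ZMod 2) × List (Fin n → ZMod 2)
  | 0 => (u, [u])
  | t + 1 =>
    let p := gpoRun n f u t
    let cand := shiftIn n p.1 (f p.1 + 1)
    let next := if cand ∈ p.2 then shiftIn n p.1 (f p.1) else cand
    (next, next :: p.2)

/-- The state of the GPO algorithm after `t` steps. -/
def gpoState (n : ℕ) (f : (Fin n → ZMod 2) → ZMod 2) (u : Fin n → ZMod 2) (t : ℕ) :
    Fin n → ZMod 2 :=
  (gpoRun n f u t).1

/-- The GPO algorithm on input `(f, u)` visits the state `v` (before halting, i.e.
before the first return to the initial state `u`). -/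
def gpoVisits (n : ℕ) (f : (Fin n → ZMod 2) → ZMod 2) (u v : Fin n → ZMod 2) : Prop :=
  ∃ t, gpoState n f u t = v ∧ ∀ t', 0 < t' → t' < t → gpoState n f u t' ≠ u

/-- `s` satisfies a feedback (nonlinear) recurrence of order `k`. -/
def GenBy (s : ℕ → ZMod 2) (k : ℕ) : Prop :=
  ∃ h : (Fin k → ZMod 2) → ZMod 2, ∀ i : ℕ, s (i + k) = h (fun j => s (i + j.val))

section Aux
variable (n : ℕ) (f : (Fin n → ZMod 2) → ZMod 2) (u : Fin n → ZMod 2)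

lemma gpoState_zero : gpoState n f u 0 = u := rfl

lemma gpoRun_snd_succ (t : ℕ) :
    (gpoRun n f u (t+1)).2 = gpoState n f u (t+1) :: (gpoRun n f u t).2 := rfl

lemma gpoState_succ (t : ℕ) :
    gpoState n f u (t+1) =
      if shiftIn n (gpoState n f u t) (f (gpoState n f u t) + 1) ∈ (gpoRun n f u t).2 then
        shiftIn n (gpoState n f u t) (f (gpoState n f u t))
      else shiftIn n (gpoState n f u t) (f (gpoState n f u t) + 1) := rfl

lemma mem_gpoRun (t : ℕ) (v : Fin n → ZMod 2) :
    v ∈ (gpoRun n f u t).2 ↔ ∃ t', t' ≤ t ∧ gpoState n f u t' = v := by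
  induction t with
  | zero =>
    constructor
    · intro hv
      rw [show (gpoRun n f u 0).2 = [u] from rfl, List.mem_singleton] at hv
      exact ⟨0, le_rfl, hv.symm⟩
    · rintro ⟨t', ht', hv⟩
      have : t' = 0 := Nat.le_zero.mp ht'
      subst this
      rw [show (gpoRun n f u 0).2 = [u] from rfl, List.mem_singleton, ← hv]
      rfl
  | succ t ih =>
    rw [gpoRun_snd_succ]
    simp only [List.mem_cons, ih]
    constructor
    · rintro (h | ⟨t', ht', h⟩)
      · exact ⟨t+1, le_rfl, h.symm⟩
      · exact ⟨t', by omega, h⟩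
    · rintro ⟨t', ht', h⟩
      by_cases hte : t' = t + 1
      · subst hte; exact Or.inl h.symm
      · exact Or.inr ⟨t', by omega, h⟩

lemma shiftIn_apply_lt (c : Fin n → ZMod 2) (b : ZMod 2) {j : ℕ} (h : j + 1 < n) :
    shiftIn n c b ⟨j, by omega⟩ = c ⟨j+1, h⟩ := dif_pos h

lemma shiftIn_apply_last (hn : 0 < n) (c : Fin n → ZMod 2) (b : ZMod 2) :
    shiftIn n c b ⟨n-1, by omega⟩ = b := by
  simp only [shiftIn]
  rw [dif_neg (by omega)]

lemma tail_of_shiftIn_eq {c c' : Fin n → ZMod 2} {b b' : ZMod 2}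
    (h : shiftIn n c b = shiftIn n c' b') :
    ∀ i : Fin n, i.val ≠ 0 → c i = c' i := by
  rintro ⟨i, hi⟩ h0
  have h0' : i ≠ 0 := h0
  obtain ⟨j, rfl⟩ : ∃ j, i = j + 1 := ⟨i - 1, by omega⟩
  have h2 := congrFun h ⟨j, Nat.lt_of_succ_lt hi⟩
  rwa [shiftIn_apply_lt n c b hi, shiftIn_apply_lt n c' b' hi] at h2

lemma last_of_shiftIn_eq (hn : 0 < n) {c c' : Fin n → ZMod 2} {b b' : ZMod 2}
    (h : shiftIn n c b = shiftIn n c' b') : b = b' := by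
  have h2 := congrFun h ⟨n-1, by omega⟩
  rwa [shiftIn_apply_last n hn c b, shiftIn_apply_last n hn c' b'] at h2

lemma gpoState_succ_cases (t : ℕ) :
    gpoState n f u (t+1) = shiftIn n (gpoState n f u t) (f (gpoState n f u t)) ∨
    gpoState n f u (t+1) = shiftIn n (gpoState n f u t) (f (gpoState n f u t) + 1) := by
  rw [gpoState_succ]
  split
  · exact Or.inl rfl
  · exact Or.inr rfl

lemma gpoState_succ_coord (t : ℕ) {j : ℕ} (h : j + 1 < n) :
    gpoState n f u (t+1) ⟨j, by omega⟩ = gpoState n f u t ⟨j+1, h⟩ := by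
  rcases gpoState_succ_cases n f u t with h' | h' <;> rw [h'] <;>
    exact shiftIn_apply_lt n _ _ h

lemma gpoState_shift : ∀ (j : ℕ) (t : ℕ) (hj : j < n),
    gpoState n f u t ⟨j, hj⟩ = gpoState n f u (t + j) ⟨0, by omega⟩ := by
  intro j
  induction j with
  | zero => intro t hj; simp
  | succ j ih =>
    intro t hj
    rw [← gpoState_succ_coord n f u t hj, ih (t+1) (by omega)]
    congr 1
    omega

lemma two_states (hn : 0 < n) {x y z : Fin n → ZMod 2}
    (hxy : ∀ i : Fin n, i.val ≠ 0 → x i = y i) (h0 : x ⟨0, hn⟩ ≠ y ⟨0, hn⟩)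
    (hz : ∀ i : Fin n, i.val ≠ 0 → z i = x i) : z = x ∨ z = y := by
  have key : ∀ x0 y0 z0 : ZMod 2, x0 ≠ y0 → z0 = x0 ∨ z0 = y0 := by decide
  rcases key _ _ (z ⟨0, hn⟩) h0 with h | h
  · left; funext i
    rcases Nat.eq_zero_or_pos i.val with hi | hi
    · rw [show i = ⟨0, hn⟩ from Fin.ext hi]; exact h
    · exact hz i (by omega)
  · right; funext i
    rcases Nat.eq_zero_or_pos i.val with hi | hi
    · rw [show i = ⟨0, hn⟩ from Fin.ext hi]; exact h
    · exact (hz i (by omega)).trans (hxy i (by omega))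

lemma mod_coord (hn : 0 < n) {N : ℕ} (hN : 0 < N) (hret : gpoState n f u N = u) :
    ∀ m, m < N + n →
      gpoState n f u (m % N) ⟨0, hn⟩ = gpoState n f u m ⟨0, hn⟩ := by
  intro m
  induction m using Nat.strong_induction_on with
  | _ m IH =>
  intro hm
  rcases lt_or_ge m N with h | h
  · rw [Nat.mod_eq_of_lt h]
  · have hr : m = N + (m - N) := by omega
    have hrn : m - N < n := by omega
    have h1 : gpoState n f u m ⟨0, hn⟩ = gpoState n f u N ⟨m - N, hrn⟩ := by
      have h3 := gpoState_shift n f u (m - N) N hrn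
      rw [show N + (m - N) = m from by omega] at h3
      exact h3.symm
    have h2 : gpoState n f u N ⟨m - N, hrn⟩ = gpoState n f u (m - N) ⟨0, hn⟩ := by
      rw [hret]
      have h3 := gpoState_shift n f u (m - N) 0 hrn
      rw [Nat.zero_add] at h3
      exact h3
    have h4 : m % N = (m - N) % N := by
      conv_lhs => rw [hr]
      rw [Nat.add_mod_left]
    rw [h4, h1, h2]
    exact IH (m - N) (by omega) (by omega)

lemma gpo_inj (hn : 0 < n) (hf : IsStandard n f) {N : ℕ} (hN : 0 < N)
    (hret : gpoState n f u N = u)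
    (hmin : ∀ T, 0 < T → gpoState n f u T = u → N ≤ T) :
    ∀ b, b < N → ∀ a, a < b → gpoState n f u a ≠ gpoState n f u b := by
  intro b
  induction b using Nat.strong_induction_on with
  | _ b IH =>
  intro hbN a hab heq
  rcases Nat.eq_zero_or_pos a with rfl | ha
  · have := hmin b (by omega) heq.symm
    omega
  obtain ⟨a', rfl⟩ : ∃ a', a = a' + 1 := ⟨a - 1, by omega⟩
  obtain ⟨b', rfl⟩ : ∃ b', b = b' + 1 := ⟨b - 1, by omega⟩
  have hab' : a' < b' := by omega
  by_cases hB : shiftIn n (gpoState n f u b') (f (gpoState n f u b') + 1) ∈ (gpoRun n f u b').2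
  case neg =>
    have hcb : gpoState n f u (b'+1)
        = shiftIn n (gpoState n f u b') (f (gpoState n f u b') + 1) := by
      rw [gpoState_succ]; exact if_neg hB
    have hmem : gpoState n f u (a'+1) ∈ (gpoRun n f u b').2 :=
      (mem_gpoRun n f u b' _).2 ⟨a'+1, by omega, rfl⟩
    rw [heq, hcb] at hmem
    exact hB hmem
  case pos =>
    have hcb : gpoState n f u (b'+1)
        = shiftIn n (gpoState n f u b') (f (gpoState n f u b')) := by
      rw [gpoState_succ]; exact if_pos hB
    by_cases hA : shiftIn n (gpoState n f u a') (f (gpoState n f u a') + 1) ∈ (gpoRun n f u a').2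
    case neg =>
      have hca : gpoState n f u (a'+1)
          = shiftIn n (gpoState n f u a') (f (gpoState n f u a') + 1) := by
        rw [gpoState_succ]; exact if_neg hA
      have hsh : shiftIn n (gpoState n f u a') (f (gpoState n f u a') + 1)
          = shiftIn n (gpoState n f u b') (f (gpoState n f u b')) := by
        rw [← hca, heq, hcb]
      have hφ := hf _ _ (tail_of_shiftIn_eq n hsh)
      have hlast := last_of_shiftIn_eq n hn hsh
      rw [hφ] at hlast
      exact (by decide : ∀ x : ZMod 2, x + 1 ≠ x) _ hlast
    case pos =>
      have hca : gpoState n f u (a'+1)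
          = shiftIn n (gpoState n f u a') (f (gpoState n f u a')) := by
        rw [gpoState_succ]; exact if_pos hA
      have hsh : shiftIn n (gpoState n f u a') (f (gpoState n f u a'))
          = shiftIn n (gpoState n f u b') (f (gpoState n f u b')) := by
        rw [← hca, heq, hcb]
      have htail := tail_of_shiftIn_eq n hsh
      have hφ : f (gpoState n f u a') = f (gpoState n f u b') := hf _ _ htail
      have hne' : gpoState n f u a' ≠ gpoState n f u b' :=
        IH b' (by omega) (by omega) a' hab'
      have h0ne : gpoState n f u a' ⟨0, hn⟩ ≠ gpoState n f u b' ⟨0, hn⟩ := by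
        intro h0
        apply hne'
        funext i
        rcases Nat.eq_zero_or_pos i.val with hi | hi
        · rw [show i = ⟨0, hn⟩ from Fin.ext hi]; exact h0
        · exact htail i (by omega)
      obtain ⟨t, htle, hct⟩ := (mem_gpoRun n f u a' _).1 hA
      rcases Nat.eq_zero_or_pos t with rfl | ht
      · -- conjugate equals u
        obtain ⟨M, hM⟩ : ∃ M, N = M + 1 := ⟨N - 1, by omega⟩
        have humem : u ∈ (gpoRun n f u M).2 := (mem_gpoRun n f u M u).2 ⟨0, Nat.zero_le _, rfl⟩
        have hretM : gpoState n f u (M+1) = u := by rw [← hM]; exact hret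
        by_cases hmN : shiftIn n (gpoState n f u M) (f (gpoState n f u M) + 1) ∈ (gpoRun n f u M).2
        · have hstep : u = shiftIn n (gpoState n f u M) (f (gpoState n f u M)) := by
            refine hretM.symm.trans ?_
            rw [gpoState_succ]; exact if_pos hmN
          have hsh2 : shiftIn n (gpoState n f u M) (f (gpoState n f u M))
              = shiftIn n (gpoState n f u a') (f (gpoState n f u a') + 1) :=
            hstep.symm.trans hct
          have htail2 := tail_of_shiftIn_eq n hsh2
          have hlast2 := last_of_shiftIn_eq n hn hsh2
          rcases two_states n hn htail h0ne htail2 with h2 | h2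
          · rw [h2] at hlast2
            exact (by decide : ∀ x : ZMod 2, x ≠ x + 1) _ hlast2
          · rw [h2, ← hφ] at hlast2
            exact (by decide : ∀ x : ZMod 2, x ≠ x + 1) _ hlast2
        · have hstep : u = shiftIn n (gpoState n f u M) (f (gpoState n f u M) + 1) := by
            refine hretM.symm.trans ?_
            rw [gpoState_succ]; exact if_neg hmN
          exact hmN (by rw [← hstep]; exact humem)
      · obtain ⟨t', rfl⟩ : ∃ t', t = t' + 1 := ⟨t - 1, by omega⟩
        obtain ⟨β, hc⟩ : ∃ β, gpoState n f u (t'+1) = shiftIn n (gpoState n f u t') β := by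
          rcases gpoState_succ_cases n f u t' with h' | h'
          exacts [⟨_, h'⟩, ⟨_, h'⟩]
        have hsh2 : shiftIn n (gpoState n f u t') β
            = shiftIn n (gpoState n f u a') (f (gpoState n f u a') + 1) := by
          rw [← hc]; exact hct
        have htail2 := tail_of_shiftIn_eq n hsh2
        rcases two_states n hn htail h0ne htail2 with h2 | h2
        · exact IH a' (by omega) (by omega) t' (by omega) h2
        · exact IH b' (by omega) (by omega) t' (by omega) h2

lemma gpo_conj (hn : 0 < n) {N : ℕ} (hN : 0 < N) (hret : gpoState n f u N = u) :
    ∃ t, t < N ∧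
      (∀ (j : ℕ) (hj : j + 1 < n),
        gpoState n f u t ⟨j, Nat.lt_of_succ_lt hj⟩ = u ⟨j, Nat.lt_of_succ_lt hj⟩) ∧
      gpoState n f u t ⟨n-1, by omega⟩ = u ⟨n-1, by omega⟩ + 1 := by
  obtain ⟨M, rfl⟩ : ∃ M, N = M + 1 := ⟨N - 1, by omega⟩
  have humem : u ∈ (gpoRun n f u M).2 := (mem_gpoRun n f u M u).2 ⟨0, Nat.zero_le _, rfl⟩
  by_cases hmN : shiftIn n (gpoState n f u M) (f (gpoState n f u M) + 1) ∈ (gpoRun n f u M).2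
  · have hu : u = shiftIn n (gpoState n f u M) (f (gpoState n f u M)) := by
      refine hret.symm.trans ?_
      rw [gpoState_succ]; exact if_pos hmN
    obtain ⟨t, htle, hct⟩ := (mem_gpoRun n f u M _).1 hmN
    refine ⟨t, by omega, ?_, ?_⟩
    · intro j hj
      have e1 : gpoState n f u t ⟨j, Nat.lt_of_succ_lt hj⟩ = gpoState n f u M ⟨j+1, hj⟩ := by
        rw [hct]; exact shiftIn_apply_lt n _ _ hj
      have e2 : u ⟨j, Nat.lt_of_succ_lt hj⟩ = gpoState n f u M ⟨j+1, hj⟩ := by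
        have h2 := congrFun hu ⟨j, Nat.lt_of_succ_lt hj⟩
        rwa [shiftIn_apply_lt n _ _ hj] at h2
      rw [e1, ← e2]
    · have e1 : gpoState n f u t ⟨n-1, by omega⟩ = f (gpoState n f u M) + 1 := by
        rw [hct]; exact shiftIn_apply_last n hn _ _
      have e2 : u ⟨n-1, by omega⟩ = f (gpoState n f u M) := by
        have h2 := congrFun hu ⟨n-1, by omega⟩
        rwa [shiftIn_apply_last n hn _ _] at h2
      rw [e1, e2]
  · exfalso
    have hstep : gpoState n f u (M+1)
        = shiftIn n (gpoState n f u M) (f (gpoState n f u M) + 1) := by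
      rw [gpoState_succ]; exact if_neg hmN
    exact hmN (by rw [← hstep, hret]; exact humem)

end Aux

/-- If a periodic sequence `s` is generated by a terminating run of the
GPO algorithm with a standard feedback function `f` of order `n` (so `s` is the
`N`-periodic extension of the output, where `N` is the first return time to the
initial state), then its nonlinear complexity is exactly `n`. -/
theorem gpo_output_nlc (n : ℕ) (hn : 1 ≤ n)
    (f : (Fin n → ZMod 2) → ZMod 2) (hf : IsStandard n f) (u : Fin n → ZMod 2)
    (N : ℕ) (hN : 0 < N) (hret : gpoState n f u N = u)
    (hmin : ∀ T, 0 < T → gpoState n f u T = u → N ≤ T)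
    (s : ℕ → ZMod 2) (hs : ∀ i, s i = gpoState n f u (i % N) ⟨0, by omega⟩) :
    IsLeast {k | GenBy s k} n := by
  classical
  have hn0 : 0 < n := hn
  -- window lemma
  have W : ∀ (i : ℕ) (j : Fin n), s (i + j.val) = gpoState n f u (i % N) j := by
    intro i j
    rw [hs]
    have h1 : gpoState n f u (i % N) j = gpoState n f u (i % N + j.val) ⟨0, hn0⟩ := by
      have h2 := gpoState_shift n f u j.val (i % N) j.isLt
      rw [← h2]
    rw [h1]
    have h2 : (i + j.val) % N = (i % N + j.val) % N := by
      conv_lhs => rw [Nat.add_mod]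
      conv_rhs => rw [Nat.add_mod, Nat.mod_mod_of_dvd _ dvd_rfl]
    rw [h2]
    exact mod_coord n f u hn0 hN hret (i % N + j.val)
      (by have := Nat.mod_lt i hN; have := j.isLt; omega)
  have inj := gpo_inj n f u hn0 hf hN hret hmin
  have inj' : ∀ a b, a < N → b < N → gpoState n f u a = gpoState n f u b → a = b := by
    intro a b haN hbN h
    rcases lt_trichotomy a b with hlt | h' | hlt
    · exact absurd h (inj b hbN a hlt)
    · exact h'
    · exact absurd h.symm (inj a haN b hlt)
  constructor
  · -- GenBy s n
    refine ⟨fun w => if hw : ∃ j, j < N ∧ gpoState n f u j = w then s (hw.choose + n) else 0, ?_⟩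
    intro i
    have hw : ∃ j, j < N ∧ gpoState n f u j = fun j2 : Fin n => s (i + j2.val) :=
      ⟨i % N, Nat.mod_lt _ hN, funext fun j2 => (W i j2).symm⟩
    show s (i + n) = if hw' : ∃ j, j < N ∧ gpoState n f u j = fun j2 : Fin n => s (i + j2.val)
      then s (hw'.choose + n) else 0
    rw [dif_pos hw]
    obtain ⟨h1, h2⟩ := hw.choose_spec
    have he : hw.choose = i % N :=
      inj' _ _ h1 (Nat.mod_lt _ hN) (h2.trans (funext fun j2 => W i j2))
    rw [he, hs (i % N + n), hs (i + n)]
    have harg : (i % N + n) % N = (i + n) % N := by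
      conv_lhs => rw [Nat.add_mod, Nat.mod_mod_of_dvd _ dvd_rfl]
      conv_rhs => rw [Nat.add_mod]
    rw [harg]
  · -- lower bound
    intro k hk
    by_contra hnk
    push_neg at hnk
    obtain ⟨h, hh⟩ := hk
    obtain ⟨t, htN, hagree, hdiff⟩ := gpo_conj n f u hn0 hN hret
    have hwin : (fun j : Fin k => s ((n-1-k) + j.val)) = fun j : Fin k => s (t + (n-1-k) + j.val) := by
      funext j
      have hjk := j.isLt
      have hj1 : (n-1-k) + j.val + 1 < n := by omega
      have e1 : s ((n-1-k) + j.val)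
          = gpoState n f u 0 ⟨(n-1-k) + j.val, by omega⟩ := by
        have h2 := W 0 ⟨(n-1-k) + j.val, by omega⟩
        rwa [Nat.zero_add, Nat.zero_mod] at h2
      have e2 : s (t + (n-1-k) + j.val)
          = gpoState n f u t ⟨(n-1-k) + j.val, by omega⟩ := by
        have h2 := W t ⟨(n-1-k) + j.val, by omega⟩
        rw [Nat.mod_eq_of_lt htN] at h2
        rw [show t + (n-1-k) + j.val = t + ((n-1-k) + j.val) from by omega]
        exact h2
      rw [e1, e2]
      exact (hagree _ hj1).symm
    have q1 := hh (n-1-k)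
    have q2 := hh (t + (n-1-k))
    rw [hwin] at q1
    have q3 : s ((n-1-k) + k) = s (t + (n-1-k) + k) := q1.trans q2.symm
    rw [show (n-1-k) + k = n-1 from by omega,
        show t + (n-1-k) + k = t + (n-1) from by omega] at q3
    have e1 : s (n-1) = gpoState n f u 0 ⟨n-1, by omega⟩ := by
      have h2 := W 0 ⟨n-1, by omega⟩
      rwa [Nat.zero_add, Nat.zero_mod] at h2
    have e2 : s (t + (n-1)) = gpoState n f u t ⟨n-1, by omega⟩ := by
      have h2 := W t ⟨n-1, by omega⟩
      rwa [Nat.mod_eq_of_lt htN] at h2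
    rw [e1, e2, hdiff] at q3
    exact (by decide : ∀ x : ZMod 2, x ≠ x + 1) _ q3
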